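/- arXiv:2102.05996 — 2 statements merged into one kernel-verified Lean document; each statement's English description precedes it below -/
import Mathlib

section
/- Let {Y_α}_{α∈A} be a finite family of real random variables with a_α ≤ Y_α ≤ b_α almost surely, and let X = Σ_{α∈A} Y_α. If A admits a proper cover of size χ (i.e., A can be partitioned/covered by χ subsets, each of which indexes a jointly independent subfamily), then for every t > 0, P(X ≥ E[X] + t) ≤ exp(−2t² / (χ · Σ_{α∈A} (b_α − a_α)²)). -/
/-!
Each centred summand `Y α - E[Y α]` is sub-Gaussian with proxy variance `((b α - a α) / 2)²` by
Hoeffding's lemma. Colouring every index by a class of the cover containing it splits the sum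
into `χ` blocks, each a sum of independent summands and hence sub-Gaussian with the sum of their
proxies. The blocks may depend on each other, but by Hölder's inequality the proxies `c j` of an
arbitrary sum still combine to `(∑ j, √(c j))²`, which Cauchy–Schwarz bounds by `χ ∑ j, c j`.
The Chernoff bound for sub-Gaussian variables then yields the tail estimate.
-/

open MeasureTheory ProbabilityTheory Finset
open scoped NNReal

namespace ProbabilityTheory.HasSubgaussianMGF

variable {Ω ι : Type*} {mΩ : MeasurableSpace Ω} {μ : Measure Ω} {X : ι → Ω → ℝ} {c : ι → ℝ≥0}

lemma mono {Z : Ω → ℝ} {c c' : ℝ≥0} (h : HasSubgaussianMGF Z c μ) (hc : c ≤ c') :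
    HasSubgaussianMGF Z c' μ where
  integrable_exp_mul := h.integrable_exp_mul
  mgf_le t := (h.mgf_le t).trans (Real.exp_le_exp.2 (by gcongr))

lemma sum [IsZeroOrProbabilityMeasure μ] {s : Finset ι}
    (h : ∀ i ∈ s, HasSubgaussianMGF (X i) (c i) μ) :
    HasSubgaussianMGF (fun ω ↦ ∑ i ∈ s, X i ω) ((∑ i ∈ s, (c i).sqrt) ^ 2) μ := by
  classical
  induction s using Finset.induction_on with
  | empty => simp
  | insert i s hi ih =>
    simp_rw [Finset.sum_insert hi]
    have := (h i (mem_insert_self i s)).add (ih fun j hj ↦ h j (mem_insert_of_mem hj))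
    rwa [NNReal.sqrt_sq] at this

lemma sum_card_mul [IsZeroOrProbabilityMeasure μ] {s : Finset ι}
    (h : ∀ i ∈ s, HasSubgaussianMGF (X i) (c i) μ) :
    HasSubgaussianMGF (fun ω ↦ ∑ i ∈ s, X i ω) (#s * ∑ i ∈ s, c i) μ := by
  refine (sum h).mono ?_
  simpa using sq_sum_le_card_mul_sum_sq (s := s) (f := fun i ↦ (c i).sqrt)

lemma sum_of_iIndepFun_cover [IsZeroOrProbabilityMeasure μ] [Fintype ι] {κ : Type*}
    [Fintype κ] {C : κ → Set ι} (hcover : ⋃ j, C j = Set.univ)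
    (h_indep : ∀ j, iIndepFun (fun i : C j ↦ X i) μ)
    (h_subG : ∀ i, HasSubgaussianMGF (X i) (c i) μ) :
    HasSubgaussianMGF (fun ω ↦ ∑ i, X i ω) (Fintype.card κ * ∑ i, c i) μ := by
  classical
  have h_coloured : ∀ i, ∃ j, i ∈ C j := fun i ↦ Set.mem_iUnion.1 (hcover ▸ Set.mem_univ i)
  choose colour hcolour using h_coloured
  have h_block : ∀ j, HasSubgaussianMGF (fun ω ↦ ∑ i : {i // colour i = j}, X i ω)
      (∑ i : {i // colour i = j}, c i) μ := fun j ↦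
    sum_of_iIndepFun (s := univ) (c := fun i ↦ c i) ((h_indep j).precomp
      (g := fun i : {i // colour i = j} ↦ (⟨i, by simpa only [i.2] using hcolour i⟩ : C j))
      fun i i' h ↦ Subtype.ext (congrArg (Subtype.val : C j → ι) h))
      fun i _ ↦ h_subG i
  have h_total := sum_card_mul (s := univ) fun j _ ↦ h_block j
  rw [card_univ, Fintype.sum_fiberwise colour c] at h_total
  exact h_total.congr (ae_of_all _ fun ω ↦ Fintype.sum_fiberwise colour fun i ↦ X i ω)

end ProbabilityTheory.HasSubgaussianMGF

open ProbabilityTheory.HasSubgaussianMGF in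
/-- **Janson's chromatic Hoeffding inequality.** If the finite index set `A` admits a
proper cover of size `χ` (each cover element indexing a jointly independent subfamily),
and `a α ≤ Y α ≤ b α` a.s., then the sum `X = ∑ Y α` satisfies
`P(X ≥ E X + t) ≤ exp (-2 t² / (χ ∑ (b α - a α)²))`. -/
theorem janson_chromatic_hoeffding
    {Ω : Type*} [MeasurableSpace Ω] (μ : Measure Ω) [IsProbabilityMeasure μ]
    {A : Type*} [Fintype A] (Y : A → Ω → ℝ) (hY : ∀ α, Measurable (Y α))
    (a b : A → ℝ) (hab : ∀ α, ∀ᵐ ω ∂μ, a α ≤ Y α ω ∧ Y α ω ≤ b α)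
    (χ : ℕ) (C : Fin χ → Set A) (hcover : (⋃ j, C j) = Set.univ)
    (hindep : ∀ j, iIndepFun
      (fun α : C j => Y (α : A)) μ)
    (t : ℝ) (ht : 0 < t) :
    (μ {ω | (∫ ω', (∑ α, Y α ω') ∂μ) + t ≤ ∑ α, Y α ω}).toReal ≤
      Real.exp (-2 * t ^ 2 / (χ * ∑ α, (b α - a α) ^ 2)) := by
  have h_subG : ∀ α, HasSubgaussianMGF (fun ω ↦ Y α ω - μ[Y α]) ((‖b α - a α‖₊ / 2) ^ 2) μ :=
    fun α ↦ hasSubgaussianMGF_of_mem_Icc (hY α).aemeasurable (hab α)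
  have h_indep j : iIndepFun (fun α : C j ↦ fun ω ↦ Y α ω - μ[Y α]) μ := by
    exact (hindep j).comp (fun (α : C j) (x : ℝ) ↦ x - μ[Y α]) fun _ ↦ measurable_id.sub_const _
  have h_event : {ω | (∫ ω', (∑ α, Y α ω') ∂μ) + t ≤ ∑ α, Y α ω}
      = {ω | t ≤ ∑ α, (Y α ω - μ[Y α])} := by
    have h_int α : Integrable (Y α) μ := .of_mem_Icc (a α) (b α) (hY α).aemeasurable (hab α)
    simp_rw [integral_finsetSum _ fun α _ ↦ h_int α, Finset.sum_sub_distrib, le_sub_iff_add_le']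
  have h_exponent : -t ^ 2 / (2 * ((Fintype.card (Fin χ) * ∑ α, (‖b α - a α‖₊ / 2) ^ 2 : ℝ≥0) : ℝ))
      = -2 * t ^ 2 / (χ * ∑ α, (b α - a α) ^ 2) := by
    push_cast
    simp only [Fintype.card_fin, Real.norm_eq_abs, div_pow, sq_abs, ← Finset.sum_div]
    ring
  rw [← measureReal_def, h_event, ← h_exponent]
  exact (sum_of_iIndepFun_cover hcover h_indep h_subG).measure_ge_le ht.le
end

section
/- Suppose (i) a symmetrization inequality: P_S(sup_{f∈F}(Γ(f) − Γ(f,S)) ≥ t) ≤ 2 P_{S,S'}(sup_{f∈F}(Γ(f,S') − Γ(f,S)) ≥ t/2) for t in the admissible range, (ii) for fixed f, P(|Γ(f) − Γ(f,S)| ≥ t/4) ≤ 6 exp(−t² N P² / 128), and (iii) the empirical functional Γ(·, S) depends on f only through the values of f on the 2Nm points of S ∪ S', so a union bound over the at most S_F(2Nm) realized behaviors applies. Then P_S( sup_{f∈F}(Γ(f) − Γ(f,S)) ≥ t ) ≤ 24 · S_F(2Nm) · exp(−t² N P² / 128). -/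
open MeasureTheory ProbabilityTheory

/-- Combining (i) symmetrization, (ii) pointwise concentration and (iii) a union bound
over the at most `G = S_F(2Nm)` realized behaviors on the sample points yields the
uniform tail bound `P_S(sup_f (Γ(f) − Γ(f,S)) ≥ t) ≤ 24 G exp(−t² N P² / 128)`. -/
theorem uniform_fairness_tail_bound
    {Ω : Type*} [MeasurableSpace Ω] (μ : Measure Ω) [IsProbabilityMeasure μ]
    [SFinite μ] {F : Type*} [Nonempty F]
    (Γ : F → ℝ) (ΓS : F → Ω → ℝ)
    (N m : ℕ) (P G : ℝ) (hG : 0 ≤ G) (t : ℝ) (ht : 0 < t)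
    -- (i) symmetrization inequality
    (hsym : (μ {ω | t ≤ ⨆ f, (Γ f - ΓS f ω)}).toReal ≤
      2 * ((μ.prod μ) {p | t / 2 ≤ ⨆ f, (ΓS f p.2 - ΓS f p.1)}).toReal)
    -- (ii) pointwise concentration for each fixed f
    (hconc : ∀ f : F, (μ {ω | t / 4 ≤ |Γ f - ΓS f ω|}).toReal ≤
      6 * Real.exp (-t ^ 2 * N * P ^ 2 / 128))
    -- (iii) union bound over at most G realized behaviors on the 2Nm sample points
    (hunion : ((μ.prod μ) {p | t / 2 ≤ ⨆ f, (ΓS f p.2 - ΓS f p.1)}).toReal ≤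
      G * ⨆ f : F, ((μ.prod μ) {p | t / 2 ≤ ΓS f p.2 - ΓS f p.1}).toReal) :
    (μ {ω | t ≤ ⨆ f, (Γ f - ΓS f ω)}).toReal ≤
      24 * G * Real.exp (-t ^ 2 * N * P ^ 2 / 128) := by
  set E := Real.exp (-t ^ 2 * N * P ^ 2 / 128) with hE
  have hEpos : 0 < E := Real.exp_pos _
  -- key pointwise bound for each f
  have key : ∀ f : F, ((μ.prod μ) {p : Ω × Ω | t / 2 ≤ ΓS f p.2 - ΓS f p.1}).toReal
      ≤ 12 * E := by
    intro f
    set A : Set Ω := {ω | t / 4 ≤ |Γ f - ΓS f ω|} with hA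
    have hsub : {p : Ω × Ω | t / 2 ≤ ΓS f p.2 - ΓS f p.1}
        ⊆ (A ×ˢ Set.univ) ∪ (Set.univ ×ˢ A) := by
      rintro ⟨x, y⟩ hp
      simp only [Set.mem_setOf_eq] at hp
      by_cases h1 : t / 4 ≤ |Γ f - ΓS f x|
      · exact Or.inl ⟨h1, trivial⟩
      · refine Or.inr ⟨trivial, ?_⟩
        push_neg at h1
        obtain ⟨h2, h3⟩ := abs_lt.mp h1
        have : t / 4 ≤ ΓS f y - Γ f := by linarith
        calc t / 4 ≤ ΓS f y - Γ f := this
          _ ≤ |Γ f - ΓS f y| := by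
            rw [abs_sub_comm]; exact le_abs_self _
    have hle : (μ.prod μ) {p : Ω × Ω | t / 2 ≤ ΓS f p.2 - ΓS f p.1} ≤ μ A + μ A := by
      calc (μ.prod μ) {p : Ω × Ω | t / 2 ≤ ΓS f p.2 - ΓS f p.1}
          ≤ (μ.prod μ) ((A ×ˢ Set.univ) ∪ (Set.univ ×ˢ A)) := measure_mono hsub
        _ ≤ (μ.prod μ) (A ×ˢ Set.univ) + (μ.prod μ) (Set.univ ×ˢ A) :=
            measure_union_le _ _
        _ = μ A * μ Set.univ + μ Set.univ * μ A := by
            rw [Measure.prod_prod, Measure.prod_prod]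
        _ = μ A + μ A := by simp
    have hfin : μ A + μ A ≠ ⊤ := by
      have : μ A ≤ 1 := prob_le_one
      exact ne_of_lt (lt_of_le_of_lt (add_le_add this this) (by norm_num))
    have := ENNReal.toReal_mono hfin hle
    rw [ENNReal.toReal_add (by finiteness) (by finiteness)] at this
    have hc := hconc f
    calc ((μ.prod μ) {p : Ω × Ω | t / 2 ≤ ΓS f p.2 - ΓS f p.1}).toReal
        ≤ (μ A).toReal + (μ A).toReal := this
      _ ≤ 6 * E + 6 * E := add_le_add hc hc
      _ = 12 * E := by ring
  have hsup : (⨆ f : F, ((μ.prod μ) {p : Ω × Ω | t / 2 ≤ ΓS f p.2 - ΓS f p.1}).toReal)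
      ≤ 12 * E := ciSup_le key
  calc (μ {ω | t ≤ ⨆ f, (Γ f - ΓS f ω)}).toReal
      ≤ 2 * ((μ.prod μ) {p | t / 2 ≤ ⨆ f, (ΓS f p.2 - ΓS f p.1)}).toReal := hsym
    _ ≤ 2 * (G * ⨆ f : F, ((μ.prod μ) {p | t / 2 ≤ ΓS f p.2 - ΓS f p.1}).toReal) := by
        linarith [hunion]
    _ ≤ 2 * (G * (12 * E)) := by
        have := mul_le_mul_of_nonneg_left hsup hG
        linarith
    _ = 24 * G * E := by ring
end
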